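/- Abstract interpolation from a two-parameter family of inequalities: suppose nonnegative reals 𝒳, 𝒪, 𝒴 and positive constants M, ρ, c, C with 2C ≥ c satisfy, for every h > 0, the inequality 4hM e^{−c/(2h)} 𝒳 + e^{(2C−c)/h} 𝒪 ≥ ρ 𝒴. Then there exists a constant K, depending only on M, ρ, c (and not on C), such that 𝒴 ≤ K 𝒪^δ 𝒳^{1−δ} with δ = c/(4C − c), provided also 𝒴 ≤ 𝒳. -/

import Mathlib

/-!
Write `G = 𝒪^δ 𝒳^{1-δ}` and `L = log (𝒳/𝒪)`. The step `h = (4C - c) / (2L)` turns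
`e^{-c/(2h)} 𝒳` and `e^{(2C-c)/h} 𝒪` into `(𝒳/𝒪)^{-δ} 𝒳 = G` and `(𝒳/𝒪)^{1-δ} 𝒪 = G`, so
`ρ 𝒴 ≤ (4hM + 1) G`, which is a bound of the right shape as long as `h ≤ 2/c`, i.e.
`L ≥ c(4C - c)/4`. For smaller `L` the ratio is controlled instead, `(𝒳/𝒪)^δ = e^{δL} ≤ e^{c²/4}`,
and `𝒴 ≤ 𝒳 = (𝒳/𝒪)^δ G` suffices. When `𝒪 = 0` letting `h → 0` gives `𝒴 ≤ 0`.
-/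

open Real Filter Topology

lemma nonpos_of_forall_pos_le_mul {a b : ℝ} (h : ∀ t : ℝ, 0 < t → a ≤ t * b) : a ≤ 0 := by
  have hlim : Tendsto (fun t : ℝ => t * b) (𝓝[>] 0) (𝓝 0) :=
    tendsto_nhdsWithin_of_tendsto_nhds ((continuous_mul_const b).tendsto' 0 0 (zero_mul b))
  exact ge_of_tendsto hlim (eventually_nhdsWithin_of_forall h)

lemma exp_div_div_log_eq_rpow {t : ℝ} (ht : 0 < t) (a b : ℝ) :
    exp (a / (b / log t)) = t ^ (a / b) := by
  rw [rpow_def_of_pos ht, div_div_eq_mul_div]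
  ring_nf

lemma mul_div_rpow_neg {X O : ℝ} (hX : 0 < X) (hO : 0 < O) (δ : ℝ) :
    X * (X / O) ^ (-δ) = O ^ δ * X ^ (1 - δ) := by
  rw [rpow_neg (div_pos hX hO).le, ← inv_rpow (div_pos hX hO).le, inv_div, div_rpow hO.le hX.le,
    rpow_sub hX, rpow_one]
  ring

lemma mul_div_rpow_one_sub {X O : ℝ} (hX : 0 < X) (hO : 0 < O) (δ : ℝ) :
    O * (X / O) ^ (1 - δ) = O ^ δ * X ^ (1 - δ) := by
  calc O * (X / O) ^ (1 - δ) = X * (X / O) ^ (-δ) := by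
        rw [sub_eq_add_neg, rpow_add (div_pos hX hO), rpow_one, ← mul_assoc,
          mul_div_cancel₀ X hO.ne']
    _ = O ^ δ * X ^ (1 - δ) := mul_div_rpow_neg hX hO δ

lemma le_exp_mul_rpow_mul_rpow {X O δ a : ℝ} (hX : 0 < X) (hO : 0 < O)
    (h : δ * log (X / O) ≤ a) : X ≤ exp a * (O ^ δ * X ^ (1 - δ)) := by
  have hXO : 0 < X / O := div_pos hX hO
  calc X = (X / O) ^ δ * (X * (X / O) ^ (-δ)) := by
        rw [mul_left_comm, ← rpow_add hXO, add_neg_cancel, rpow_zero, mul_one]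
    _ ≤ exp a * (X * (X / O) ^ (-δ)) := by
        gcongr
        rw [rpow_def_of_pos hXO, mul_comm]
        exact exp_le_exp.2 h
    _ = exp a * (O ^ δ * X ^ (1 - δ)) := by rw [mul_div_rpow_neg hX hO]

def InterpolationFamily (M ρ c C X O Y : ℝ) : Prop :=
  ∀ h : ℝ, 0 < h → ρ * Y ≤ 4 * h * M * exp (-c / (2 * h)) * X + exp ((2 * C - c) / h) * O

namespace InterpolationFamily

variable {M ρ c C X O Y : ℝ}

lemma mul_nonpos_of_right_eq_zero (hineq : InterpolationFamily M ρ c C X 0 Y) (hM : 0 ≤ M)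
    (hc : 0 ≤ c) (hX : 0 ≤ X) : ρ * Y ≤ 0 := by
  refine nonpos_of_forall_pos_le_mul (b := 4 * M * X) fun h hh => ?_
  have hexp : exp (-c / (2 * h)) ≤ 1 := exp_le_one_iff.2 (by
    apply div_nonpos_of_nonpos_of_nonneg <;> linarith)
  calc ρ * Y ≤ 4 * h * M * exp (-c / (2 * h)) * X := by simpa using hineq h hh
    _ ≤ 4 * h * M * 1 * X := by gcongr
    _ = h * (4 * M * X) := by ring

lemma mul_le_of_lt_log_div (hineq : InterpolationFamily M ρ c C X O Y) (hM : 0 ≤ M)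
    (hc : 0 < c) (hC : c ≤ 2 * C) (hX : 0 < X) (hO : 0 < O)
    (hL : c * (4 * C - c) / 4 < log (X / O)) :
    ρ * Y ≤ (8 * M / c + 1) * (O ^ (c / (4 * C - c)) * X ^ (1 - c / (4 * C - c))) := by
  set δ := c / (4 * C - c) with hδ
  set L := log (X / O)
  have hD : 0 < 4 * C - c := by linarith
  have hLpos : 0 < L := lt_of_le_of_lt (by positivity) hL
  set h := (4 * C - c) / 2 / L
  have hXO : 0 < X / O := div_pos hX hO
  have hdecay : exp (-c / (2 * h)) = (X / O) ^ (-δ) := by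
    rw [div_mul_eq_div_div, exp_div_div_log_eq_rpow hXO]
    congr 1
    rw [hδ]
    field_simp
  have hgrowth : exp ((2 * C - c) / h) = (X / O) ^ (1 - δ) := by
    rw [exp_div_div_log_eq_rpow hXO]
    congr 1
    rw [hδ, div_div_eq_mul_div, one_sub_div hD.ne']
    ring
  have hstep : (4 * C - c) / 2 / L ≤ 2 / c := by
    rw [div_div, div_le_div_iff₀ (by positivity) hc]
    linarith
  calc ρ * Y ≤ 4 * h * M * exp (-c / (2 * h)) * X + exp ((2 * C - c) / h) * O :=
        hineq h (by positivity)
    _ = (4 * h * M + 1) * (O ^ δ * X ^ (1 - δ)) := by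
        rw [hdecay, hgrowth, mul_assoc _ _ X, mul_comm _ X, mul_comm _ O,
          mul_div_rpow_neg hX hO, mul_div_rpow_one_sub hX hO]
        ring
    _ ≤ (4 * (2 / c) * M + 1) * (O ^ δ * X ^ (1 - δ)) := by gcongr
    _ = (8 * M / c + 1) * (O ^ δ * X ^ (1 - δ)) := by ring

end InterpolationFamily

/-- Abstract interpolation from a two-parameter family of inequalities:
if nonnegative reals `𝒳, 𝒪, 𝒴` and positive constants `M, ρ, c, C` with `2C ≥ c` satisfy
`4hM e^{−c/(2h)} 𝒳 + e^{(2C−c)/h} 𝒪 ≥ ρ 𝒴` for every `h > 0`, then there is a constant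
`K` depending only on `M, ρ, c` (not on `C`) with `𝒴 ≤ K 𝒪^δ 𝒳^{1−δ}`, `δ = c/(4C−c)`,
provided also `𝒴 ≤ 𝒳`. -/
theorem abstract_interpolation_optimization
    (M ρ c : ℝ) (hM : 0 < M) (hρ : 0 < ρ) (hc : 0 < c) :
    ∃ K : ℝ, 0 < K ∧
      ∀ C : ℝ, c ≤ 2 * C →
        ∀ X O Y : ℝ, 0 ≤ X → 0 ≤ O → 0 ≤ Y →
          (∀ h : ℝ, 0 < h →
            ρ * Y ≤ 4 * h * M * Real.exp (-c / (2 * h)) * X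
              + Real.exp ((2 * C - c) / h) * O) →
          Y ≤ X →
          Y ≤ K * O ^ (c / (4 * C - c)) * X ^ (1 - c / (4 * C - c)) := by
  refine ⟨max (exp (c ^ 2 / 4)) ((8 * M / c + 1) / ρ), lt_max_of_lt_left (exp_pos _), ?_⟩
  intro C hC X O Y hX hO _ hineq hYX
  set δ := c / (4 * C - c) with hδ
  have hKG : 0 ≤ max (exp (c ^ 2 / 4)) ((8 * M / c + 1) / ρ) * O ^ δ * X ^ (1 - δ) := by
    positivity
  rcases hO.eq_or_lt with rfl | hO
  · have := InterpolationFamily.mul_nonpos_of_right_eq_zero hineq hM.le hc.le hX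
    exact (nonpos_of_mul_nonpos_right this hρ).trans hKG
  rcases hX.eq_or_lt with rfl | hX
  · exact hYX.trans hKG
  rw [mul_assoc]
  rcases le_or_gt (log (X / O)) (c * (4 * C - c) / 4) with hL | hL
  · have hD : 0 < 4 * C - c := by linarith
    have hratio : δ * log (X / O) ≤ c ^ 2 / 4 :=
      calc δ * log (X / O) ≤ δ * (c * (4 * C - c) / 4) := by gcongr
        _ = c ^ 2 / 4 := by rw [hδ]; field_simp
    calc Y ≤ X := hYX
      _ ≤ exp (c ^ 2 / 4) * (O ^ δ * X ^ (1 - δ)) := le_exp_mul_rpow_mul_rpow hX hO hratio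
      _ ≤ _ := by gcongr; exact le_max_left _ _
  · have := InterpolationFamily.mul_le_of_lt_log_div hineq hM.le hc hC hX hO hL
    calc Y ≤ (8 * M / c + 1) / ρ * (O ^ δ * X ^ (1 - δ)) := by
          rw [div_mul_eq_mul_div, le_div_iff₀ hρ]; linarith
      _ ≤ _ := by gcongr; exact le_max_right _ _
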